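/- arXiv:2408.12526 — 2 statements merged into one kernel-verified Lean document; each statement's English description precedes it below -/
import Mathlib

section
/- Let H be a real inner product space, T ∈ H a fixed target, and define the boosting loss C : H → ℝ by C(F) = (1/2)·‖T − F‖², whose gradient at F is F − T. Fix a constant L > 1, a bound R > 0, a starting point F⁰ ∈ H, and a sequence of student directions S¹, S², … in H with 0 < ‖Sᵗ‖ ≤ R for every t ≥ 1. Define recursively αₜ := −⟨Fᵗ⁻¹ − T, Sᵗ⟩ / (L·‖Sᵗ‖²) and Fᵗ := Fᵗ⁻¹ + αₜ·Sᵗ. Then either the procedure halts, i.e. there exists a round t ≥ 1 with −⟨Fᵗ⁻¹ − T, Sᵗ⟩ ≤ 0, or the real sequence C(Fᵗ) converges to some finite value L* ≥ 0 and lim_{t→∞} ⟨Fᵗ − T, Sᵗ⁺¹⟩ = 0. -/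
open RealInnerProductSpace Filter

/-- Convergence theorem for sequential student training viewed as gradient boosting:
either the procedure halts at some round `t ≥ 1` with `−⟨Fᵗ⁻¹ − T, Sᵗ⟩ ≤ 0`, or the loss
values `C(Fᵗ) = (1/2)·‖T − Fᵗ‖²` converge to some finite value `L* ≥ 0` and the inner
products `⟨Fᵗ − T, Sᵗ⁺¹⟩` tend to `0`. -/
theorem boosting_convergence_dichotomy
    {H : Type*} [NormedAddCommGroup H] [InnerProductSpace ℝ H]
    (T : H) (L : ℝ) (hL : 1 < L) (R : ℝ) (hR : 0 < R)
    (F : ℕ → H) (S : ℕ → H) (α : ℕ → ℝ)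
    (hS : ∀ t : ℕ, 1 ≤ t → 0 < ‖S t‖ ∧ ‖S t‖ ≤ R)
    (hα : ∀ t : ℕ, α (t + 1) = -(⟪F t - T, S (t + 1)⟫ : ℝ) / (L * ‖S (t + 1)‖ ^ 2))
    (hF : ∀ t : ℕ, F (t + 1) = F t + α (t + 1) • S (t + 1)) :
    (∃ t : ℕ, 1 ≤ t ∧ -(⟪F (t - 1) - T, S t⟫ : ℝ) ≤ 0) ∨
    (∃ Lstar : ℝ, 0 ≤ Lstar ∧
      Tendsto (fun t : ℕ => (1 / 2 : ℝ) * ‖T - F t‖ ^ 2) atTop (nhds Lstar) ∧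
      Tendsto (fun t : ℕ => (⟪F t - T, S (t + 1)⟫ : ℝ)) atTop (nhds 0)) := by
  right
  have hL0 : (0:ℝ) < L := lt_trans one_pos hL
  have h2L1 : (0:ℝ) < 2*L - 1 := by linarith
  set p : ℕ → ℝ := fun t => (⟪F t - T, S (t + 1)⟫ : ℝ) with hp
  set c : ℕ → ℝ := fun t => (1 / 2 : ℝ) * ‖T - F t‖ ^ 2 with hc
  set d : ℕ → ℝ := fun t => p t ^ 2 * (2*L - 1) / (2 * L^2 * ‖S (t+1)‖^2) with hd
  have hn : ∀ t : ℕ, 0 < ‖S (t+1)‖ := fun t => (hS (t+1) (by omega)).1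
  have key : ∀ t, c (t+1) = c t - d t := by
    intro t
    have hn2 : (0:ℝ) < ‖S (t+1)‖^2 := pow_pos (hn t) 2
    have hexp : ‖T - F (t+1)‖^2
        = ‖T - F t‖^2 + 2 * (α (t+1) * p t) + α (t+1)^2 * ‖S (t+1)‖^2 := by
      rw [hF t]
      have h1 : T - (F t + α (t+1) • S (t+1)) = (T - F t) + (-(α (t+1))) • S (t+1) := by
        module
      rw [h1, norm_add_sq_real, real_inner_smul_right, norm_smul]
      have h2 : (⟪T - F t, S (t+1)⟫ : ℝ) = - p t := by
        rw [hp]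
        rw [show T - F t = -(F t - T) by abel, inner_neg_left]
      rw [h2]
      simp [mul_pow]
    rw [hc]
    simp only []
    rw [hexp, hα t, hd]
    have hpdef : -(⟪F t - T, S (t + 1)⟫ : ℝ) = - p t := by rw [hp]
    rw [hpdef]
    field_simp
    ring
  have hd0 : ∀ t, 0 ≤ d t := by
    intro t
    have := hn t
    rw [hd]
    positivity
  have hant : Antitone c := by
    apply antitone_nat_of_succ_le
    intro t
    rw [key t]
    linarith [hd0 t]
  have hc0 : ∀ t, 0 ≤ c t := fun t => by rw [hc]; positivity
  have hbdd : BddBelow (Set.range c) := ⟨0, by rintro x ⟨t, rfl⟩; exact hc0 t⟩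
  have hctend : Tendsto c atTop (nhds (⨅ t, c t)) := tendsto_atTop_ciInf hant hbdd
  refine ⟨⨅ t, c t, le_ciInf hc0, hctend, ?_⟩
  -- d → 0
  have hcsucc : Tendsto (fun t => c (t+1)) atTop (nhds (⨅ t, c t)) :=
    hctend.comp (tendsto_add_atTop_nat 1)
  have hdtend : Tendsto d atTop (nhds 0) := by
    have : Tendsto (fun t => c t - c (t+1)) atTop (nhds ((⨅ t, c t) - ⨅ t, c t)) :=
      hctend.sub hcsucc
    simp only [sub_self] at this
    convert this using 1
    funext t
    rw [key t]; ring
  -- p^2 → 0 via squeeze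
  have hCpos : (0:ℝ) < 2 * L^2 * R^2 / (2*L - 1) := by positivity
  have hsq : Tendsto (fun t => p t ^ 2) atTop (nhds 0) := by
    have hub : ∀ t, p t ^ 2 ≤ d t * (2 * L^2 * R^2 / (2*L - 1)) := by
      intro t
      have hnp := hn t
      have hnR := (hS (t+1) (by omega)).2
      have hn2 : (0:ℝ) < ‖S (t+1)‖^2 := pow_pos hnp 2
      have heq : p t ^ 2 = d t * (2 * L^2 * ‖S (t+1)‖^2 / (2*L - 1)) := by
        rw [hd]; field_simp
      have hle : ‖S (t+1)‖^2 ≤ R^2 := by nlinarith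
      rw [heq]
      have hmul : 2 * L^2 * ‖S (t+1)‖^2 / (2*L - 1) ≤ 2 * L^2 * R^2 / (2*L - 1) := by
        gcongr
      exact mul_le_mul_of_nonneg_left hmul (hd0 t)
    have hlim : Tendsto (fun t => d t * (2 * L^2 * R^2 / (2*L - 1))) atTop (nhds 0) := by
      have := hdtend.mul_const (2 * L^2 * R^2 / (2*L - 1))
      simpa using this
    exact squeeze_zero (fun t => sq_nonneg _) hub hlim
  -- p → 0
  have habs : Tendsto (fun t => |p t|) atTop (nhds 0) := by
    have := (Real.continuous_sqrt.tendsto 0).comp hsq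
    simpa [Function.comp_def, Real.sqrt_sq_eq_abs] using this
  exact (tendsto_zero_iff_abs_tendsto_zero _).mpr habs
end

section
/- Let H be a real inner product space, T ∈ H a fixed target, and define the boosting loss C : H → ℝ by C(F) = (1/2)·‖T − F‖², whose gradient at F is F − T. Fix L > 1, F⁰ ∈ H, and a sequence S¹, S², … in H with Sᵗ ≠ 0 for all t, and define recursively αₜ := −⟨Fᵗ⁻¹ − T, Sᵗ⟩ / (L·‖Sᵗ‖²) and Fᵗ := Fᵗ⁻¹ + αₜ·Sᵗ. If the procedure never halts, i.e. −⟨Fᵗ⁻¹ − T, Sᵗ⟩ > 0 for every t ≥ 1, then the series Σ_{t≥0} ⟨Fᵗ − T, Sᵗ⁺¹⟩² / ‖Sᵗ⁺¹‖² is summable, with sum at most 2·L·C(F⁰). In particular, if additionally ‖Sᵗ‖ ≤ R for all t and some R > 0, then ⟨Fᵗ − T, Sᵗ⁺¹⟩ → 0 as t → ∞. -/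
open RealInnerProductSpace Filter

/-!
Each step is an exact line search damped by `1 / L`: expanding the square shows that it lowers the
loss `C(F) = ½‖T − F‖²` by `(2 − 1/L)/(2L) · ⟨F − T, S⟩² / ‖S‖²`, which is at least
`1/(2L) · ⟨F − T, S⟩² / ‖S‖²` once `L ≥ 1`. The decrements telescope against the nonnegative
loss, so the normalized squared inner products have partial sums bounded by `2L·C(F⁰)`; when the
directions are bounded by `R`, the unnormalized squares are at most `R²` times a summable
sequence and hence tend to zero.
-/

lemma summable_and_tsum_le_of_le_sub_succ {d C : ℕ → ℝ} (hd : ∀ t, 0 ≤ d t)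
    (hC : ∀ t, 0 ≤ C t) (hdC : ∀ t, d t ≤ C t - C (t + 1)) :
    Summable d ∧ ∑' t, d t ≤ C 0 := by
  have hpartial : ∀ n, ∑ t ∈ Finset.range n, d t ≤ C 0 := fun n =>
    calc ∑ t ∈ Finset.range n, d t
        ≤ ∑ t ∈ Finset.range n, (C t - C (t + 1)) := Finset.sum_le_sum fun t _ => hdC t
      _ = C 0 - C n := Finset.sum_range_sub' C n
      _ ≤ C 0 := sub_le_self _ (hC n)
  have hsummable := summable_of_sum_range_le hd hpartial
  exact ⟨hsummable, hsummable.tsum_le_of_sum_range_le hpartial⟩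

section Boosting

variable {H : Type*} [NormedAddCommGroup H]

noncomputable def boostingLoss (T F : H) : ℝ := 1 / 2 * ‖T - F‖ ^ 2

lemma boostingLoss_nonneg (T F : H) : 0 ≤ boostingLoss T F := by
  unfold boostingLoss
  positivity

variable [InnerProductSpace ℝ H]

-- Holds for `S = 0` as well, where the step and the correction term both vanish.
lemma norm_sub_add_smul_sq_of_eq_div {T F S : H} {L α : ℝ}
    (hα : α = -⟪F - T, S⟫ / (L * ‖S‖ ^ 2)) :
    ‖T - (F + α • S)‖ ^ 2 = ‖T - F‖ ^ 2 - (2 - 1 / L) / L * (⟪F - T, S⟫ ^ 2 / ‖S‖ ^ 2) := by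
  have hexpand : ‖T - (F + α • S)‖ ^ 2 = ‖F - T‖ ^ 2 + 2 * α * ⟪F - T, S⟫ + α ^ 2 * ‖S‖ ^ 2 := by
    rw [← norm_neg, neg_sub, add_sub_right_comm, norm_add_sq_real, inner_smul_right, norm_smul,
      Real.norm_eq_abs, mul_pow, sq_abs]
    ring
  rw [hexpand, norm_sub_rev F T, hα]
  by_cases hS : S = 0
  · simp [hS]
  have hS' : ‖S‖ ≠ 0 := norm_ne_zero_iff.mpr hS
  field_simp
  ring

lemma sq_inner_div_le_boostingLoss_sub {T F S : H} {L α : ℝ} (hL : 1 ≤ L)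
    (hα : α = -⟪F - T, S⟫ / (L * ‖S‖ ^ 2)) :
    ⟪F - T, S⟫ ^ 2 / ‖S‖ ^ 2 ≤ 2 * L * (boostingLoss T F - boostingLoss T (F + α • S)) := by
  have hL0 : 0 < L := one_pos.trans_le hL
  have hdecrease : 2 * L * (boostingLoss T F - boostingLoss T (F + α • S)) =
      (2 - 1 / L) * (⟪F - T, S⟫ ^ 2 / ‖S‖ ^ 2) := by
    rw [boostingLoss, boostingLoss, norm_sub_add_smul_sq_of_eq_div hα]
    field_simp
    ring
  have hfactor : 1 ≤ 2 - 1 / L := by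
    have : 1 / L ≤ 1 := (div_le_one hL0).mpr hL
    linarith
  rw [hdecrease]
  exact le_mul_of_one_le_left (by positivity) hfactor

lemma sq_inner_le_sq_mul_sq_inner_div {x s : H} {R : ℝ} (hs : ‖s‖ ≤ R) :
    ⟪x, s⟫ ^ 2 ≤ R ^ 2 * (⟪x, s⟫ ^ 2 / ‖s‖ ^ 2) := by
  by_cases hs0 : s = 0
  · simp [hs0]
  have hnorm : ‖s‖ ^ 2 ≠ 0 := pow_ne_zero 2 (norm_ne_zero_iff.mpr hs0)
  calc ⟪x, s⟫ ^ 2 = ‖s‖ ^ 2 * (⟪x, s⟫ ^ 2 / ‖s‖ ^ 2) := (mul_div_cancel₀ _ hnorm).symm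
    _ ≤ R ^ 2 * (⟪x, s⟫ ^ 2 / ‖s‖ ^ 2) := by gcongr

lemma tendsto_inner_zero_of_summable_sq_inner_div {x s : ℕ → H} {R : ℝ} (hs : ∀ t, ‖s t‖ ≤ R)
    (hsum : Summable fun t => ⟪x t, s t⟫ ^ 2 / ‖s t‖ ^ 2) :
    Tendsto (fun t => ⟪x t, s t⟫) atTop (nhds 0) := by
  have hsq : Tendsto (fun t => ⟪x t, s t⟫ ^ 2) atTop (nhds 0) := by
    have hbound := hsum.tendsto_atTop_zero.const_mul (R ^ 2)
    rw [mul_zero] at hbound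
    exact squeeze_zero (fun t => sq_nonneg _) (fun t => sq_inner_le_sq_mul_sq_inner_div (hs t))
      hbound
  have habs := hsq.sqrt
  simp only [Real.sqrt_zero, Real.sqrt_sq_eq_abs] at habs
  exact tendsto_zero_iff_abs_tendsto_zero _ |>.mpr habs

end Boosting

theorem boosting_nonhalting_inner_products_vanish_general
    {H : Type*} [NormedAddCommGroup H] [InnerProductSpace ℝ H]
    (T : H) (L : ℝ) (hL : 1 < L) (F : ℕ → H) (S : ℕ → H) (α : ℕ → ℝ)
    (hα : ∀ t : ℕ, α (t + 1) = -(⟪F t - T, S (t + 1)⟫ : ℝ) / (L * ‖S (t + 1)‖ ^ 2))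
    (hF : ∀ t : ℕ, F (t + 1) = F t + α (t + 1) • S (t + 1)) :
    Summable (fun t : ℕ => (⟪F t - T, S (t + 1)⟫ : ℝ) ^ 2 / ‖S (t + 1)‖ ^ 2) ∧
    (∑' t : ℕ, (⟪F t - T, S (t + 1)⟫ : ℝ) ^ 2 / ‖S (t + 1)‖ ^ 2) ≤
      2 * L * ((1 / 2 : ℝ) * ‖T - F 0‖ ^ 2) ∧
    (∀ R : ℝ, 0 < R → (∀ t, ‖S t‖ ≤ R) →
      Tendsto (fun t : ℕ => (⟪F t - T, S (t + 1)⟫ : ℝ)) atTop (nhds 0)) := by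
  have hdescent : ∀ t, ⟪F t - T, S (t + 1)⟫ ^ 2 / ‖S (t + 1)‖ ^ 2 ≤
      2 * L * boostingLoss T (F t) - 2 * L * boostingLoss T (F (t + 1)) := fun t => by
    rw [← mul_sub, hF t]
    exact sq_inner_div_le_boostingLoss_sub hL.le (hα t)
  obtain ⟨hsummable, htsum⟩ := summable_and_tsum_le_of_le_sub_succ
    (fun t => div_nonneg (sq_nonneg _) (sq_nonneg _))
    (fun t => mul_nonneg (by linarith) (boostingLoss_nonneg T (F t))) hdescent
  exact ⟨hsummable, htsum, fun R _ hR =>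
    tendsto_inner_zero_of_summable_sq_inner_div (fun t => hR (t + 1)) hsummable⟩

/-- Summing the per-step descent estimates over all non-halting boosting steps: the series
`Σₜ ⟨Fᵗ − T, Sᵗ⁺¹⟩² / ‖Sᵗ⁺¹‖²` is summable with sum at most `2·L·C(F⁰)`, and if the student
directions have norms bounded by some `R > 0` then `⟨Fᵗ − T, Sᵗ⁺¹⟩ → 0`. -/
theorem boosting_nonhalting_inner_products_vanish
    {H : Type*} [NormedAddCommGroup H] [InnerProductSpace ℝ H]
    (T : H) (L : ℝ) (hL : 1 < L) (F : ℕ → H) (S : ℕ → H) (α : ℕ → ℝ)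
    (hS : ∀ t, S t ≠ 0)
    (hα : ∀ t : ℕ, α (t + 1) = -(⟪F t - T, S (t + 1)⟫ : ℝ) / (L * ‖S (t + 1)‖ ^ 2))
    (hF : ∀ t : ℕ, F (t + 1) = F t + α (t + 1) • S (t + 1))
    (hnonhalt : ∀ t : ℕ, 0 < -(⟪F t - T, S (t + 1)⟫ : ℝ)) :
    Summable (fun t : ℕ => (⟪F t - T, S (t + 1)⟫ : ℝ) ^ 2 / ‖S (t + 1)‖ ^ 2) ∧
    (∑' t : ℕ, (⟪F t - T, S (t + 1)⟫ : ℝ) ^ 2 / ‖S (t + 1)‖ ^ 2) ≤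
      2 * L * ((1 / 2 : ℝ) * ‖T - F 0‖ ^ 2) ∧
    (∀ R : ℝ, 0 < R → (∀ t, ‖S t‖ ≤ R) →
      Tendsto (fun t : ℕ => (⟪F t - T, S (t + 1)⟫ : ℝ)) atTop (nhds 0)) :=
  boosting_nonhalting_inner_products_vanish_general T L hL F S α hα hF
end
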